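/- For all integers m ≥ 2 and x ≥ 1 and every codeword c ∈ C(m,x) whose leftmost bit c_{m−1} equals 1, the index of c satisfies 2·g(c) = N(m,x) + Σ_{i=0}^{m−2} N(i−x+1, x)·[c_i = 1], where the sum ranges over the positions i with c_i = 1 and any term N(k,x) with k ≤ 1 is interpreted, by convention, as 2. -/

import Mathlib

/-- `noForbidden m x c` says the binary word `c = (c_{m-1}, …, c_0)` contains no contiguous
subword of the form `0 1^y 0` or `1 0^y 1` for any `1 ≤ y ≤ x`. -/
def noForbidden (m x : ℕ) (c : Fin m → Bool) : Prop :=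
  ∀ j y : ℕ, 1 ≤ y → y ≤ x → (h : j + y + 1 < m) →
    ¬ ((∀ k, 1 ≤ k → (hk : k ≤ y) → c ⟨j + k, by omega⟩ = ! c ⟨j, by omega⟩) ∧
        c ⟨j + y + 1, h⟩ = c ⟨j, by omega⟩)

/-- `N(m, x)`: the cardinality of the LOCO code `C(m, x)`. -/
noncomputable def locoN (m x : ℕ) : ℕ := Nat.card {c : Fin m → Bool // noForbidden m x c}

/-- `N(k, x)` extended to integer `k` by the convention `N(k, x) = 2` for `k ≤ 1`. -/
noncomputable def Nex (k : ℤ) (x : ℕ) : ℤ := if k ≤ 1 then 2 else (locoN k.toNat x : ℤ)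

/-- Strict lexicographic order on binary words, comparing bits from `c_{m-1}`
(most significant) down to `c_0`, with `0 < 1`. -/
def lexLt (m : ℕ) (d c : Fin m → Bool) : Prop :=
  ∃ i : Fin m, d i = false ∧ c i = true ∧ ∀ j : Fin m, (i : ℕ) < (j : ℕ) → d j = c j

/-- The index `g(m, x, c)` of a codeword: the number of codewords of `C(m, x)` that
precede `c` in lexicographic order. -/
noncomputable def locoIdx (m x : ℕ) (c : Fin m → Bool) : ℕ :=
  Nat.card {d : Fin m → Bool // noForbidden m x d ∧ lexLt m d c}

/-!
Codewords are read as lists, most significant bit first: the forbidden patterns are palindromes,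
so reversal preserves the code, and the order on codewords becomes the lexicographic order on lists.
Complementing every bit preserves the code and reverses the order. Hence half of the codewords of
each length begin with `1`, and the codewords `0 e` with `e < f` correspond to the codewords `1 e`
with `e > !f`. After a switch `1 0` a codeword must continue with `x` more zeros (or end), and
deleting them leaves a codeword `0 u`. By induction on the length of `f`, the number of codewords
`1 e` with `e < f` is the sum, over the `1`s of `f` followed by `k` bits, of the number
`N(k - x + 1) / 2` of codewords `1 0 e` with `e` of length `k`.
-/

namespace Loco

variable {x : ℕ}

theorem map_not_lt_map_not_iff {l₁ l₂ : List Bool} (h : l₁.length = l₂.length) :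
    l₁.map not < l₂.map not ↔ l₂ < l₁ := by
  induction l₁ generalizing l₂ with
  | nil => cases l₂ <;> simp_all
  | cons a l₁ ih =>
    cases l₂ with
    | nil => simp at h
    | cons b l₂ =>
      simp only [List.map_cons, List.cons_lt_cons_iff, ih (by simpa using h)]
      cases a <;> cases b <;> simp

theorem append_lt_append_left_iff {α : Type*} [Preorder α] (w : List α) {a b : List α} :
    w ++ a < w ++ b ↔ a < b := by
  induction w with
  | nil => rfl
  | cons c w ih => simpa using ih

theorem not_lt_replicate_false {l : List Bool} {n : ℕ} (h : l.length = n) :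
    ¬ l < List.replicate n false := by
  induction l generalizing n with
  | nil => subst h; simp
  | cons a l ih =>
    subst h
    simp only [List.length_cons, List.replicate_succ, List.cons_lt_cons_iff, not_or, not_and]
    exact ⟨by simp, fun _ => ih rfl⟩

theorem map_not_map_not (l : List Bool) : (l.map not).map not = l := by
  simp [Function.comp_def]

def forbiddenWord (b : Bool) (y : ℕ) : List Bool := b :: List.replicate y (!b) ++ [b]

def IsLocoWord (x : ℕ) (l : List Bool) : Prop :=
  ∀ b y, 1 ≤ y → y ≤ x → ¬ forbiddenWord b y <:+: l

theorem forbiddenWord_getElem (b : Bool) (y i : ℕ) (hi : i < (forbiddenWord b y).length) :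
    (forbiddenWord b y)[i] = if i = 0 ∨ i = y + 1 then b else !b := by
  simp only [forbiddenWord, List.length_append, List.length_cons, List.length_replicate,
    List.length_nil] at hi
  rcases i with _ | i
  · simp [forbiddenWord]
  · simp only [forbiddenWord, List.cons_append, List.getElem_cons_succ, List.getElem_append,
      List.getElem_replicate, List.length_replicate, List.getElem_singleton]
    split_ifs <;> grind

theorem isLocoWord_cons_iff {a : Bool} {l : List Bool} :
    IsLocoWord x (a :: l) ↔
      IsLocoWord x l ∧ ∀ b y, 1 ≤ y → y ≤ x → ¬ forbiddenWord b y <+: a :: l := by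
  simp only [IsLocoWord, List.infix_cons_iff, not_or]
  exact ⟨fun h => ⟨fun b y hy hyx => (h b y hy hyx).2, fun b y hy hyx => (h b y hy hyx).1⟩,
    fun h b y hy hyx => ⟨h.2 b y hy hyx, h.1 b y hy hyx⟩⟩

theorem isLocoWord_cons_cons_self {b : Bool} {l : List Bool} :
    IsLocoWord x (b :: b :: l) ↔ IsLocoWord x (b :: l) := by
  refine isLocoWord_cons_iff.trans ⟨And.left, fun h => ⟨h, fun c y hy _ hp => ?_⟩⟩
  obtain ⟨y, rfl⟩ := Nat.exists_eq_add_of_le' hy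
  simp only [forbiddenWord, List.replicate_succ, List.cons_append, List.cons_prefix_cons,
    Bool.not_eq_eq_eq_not] at hp
  grind

theorem isLocoWord_cons_replicate_append {b : Bool} {k : ℕ} {l : List Bool} :
    IsLocoWord x (b :: (List.replicate k b ++ l)) ↔ IsLocoWord x (b :: l) := by
  induction k with
  | zero => rfl
  | succ k ih => rw [List.replicate_succ, List.cons_append, isLocoWord_cons_cons_self, ih]

theorem map_not_forbiddenWord (b : Bool) (y : ℕ) :
    (forbiddenWord b y).map not = forbiddenWord (!b) y := by
  simp [forbiddenWord]

theorem isLocoWord_map_not {l : List Bool} : IsLocoWord x (l.map not) ↔ IsLocoWord x l := by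
  refine ⟨fun h b y hy hyx hbl => h (!b) y hy hyx ?_,
    fun h b y hy hyx hbl => h (!b) y hy hyx ?_⟩
  · simpa [map_not_forbiddenWord] using hbl.map not
  · simpa [Function.comp_def, map_not_forbiddenWord] using hbl.map not

theorem isLocoWord_reverse {l : List Bool} : IsLocoWord x l.reverse ↔ IsLocoWord x l := by
  have hpal : ∀ b y, (forbiddenWord b y).reverse = forbiddenWord b y := by
    simp [forbiddenWord]
  simp only [IsLocoWord, ← List.reverse_infix (l₁ := forbiddenWord _ _) (l₂ := l), hpal]

theorem isLocoWord_replicate (k : ℕ) (b : Bool) : IsLocoWord x (List.replicate k b) := by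
  intro c y hy _ hp
  obtain ⟨y, rfl⟩ := Nat.exists_eq_add_of_le' hy
  have hc : c = b :=
    List.eq_of_mem_replicate (hp.subset (show c ∈ _ by simp [forbiddenWord]))
  have hnc : (!c) = b := List.eq_of_mem_replicate
    (hp.subset (show (!c) ∈ forbiddenWord c (y + 1) by simp [forbiddenWord, List.replicate_succ]))
  simp [hc] at hnc

theorem isLocoWord_cons_replicate (a : Bool) (k : ℕ) (b : Bool) :
    IsLocoWord x (a :: List.replicate k b) := by
  refine isLocoWord_cons_iff.mpr ⟨isLocoWord_replicate k b, fun c y hy _ hp => ?_⟩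
  obtain ⟨y, rfl⟩ := Nat.exists_eq_add_of_le' hy
  simp only [forbiddenWord, List.cons_append, List.cons_prefix_cons] at hp
  obtain ⟨rfl, hp⟩ := hp
  have h1 : c = b := List.eq_of_mem_replicate (hp.subset (show c ∈ _ by simp))
  have h2 : (!c) = b :=
    List.eq_of_mem_replicate (hp.subset (show (!c) ∈ _ by simp [List.replicate_succ]))
  simp [h1] at h2

theorem IsLocoWord.forall_mem_take_eq_false {e : List Bool}
    (h : IsLocoWord x (true :: false :: e)) :
    ∀ a ∈ e.take x, a = false := by
  suffices key : ∀ k, 1 ≤ k → ∀ e : List Bool,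
      IsLocoWord x (true :: (List.replicate k false ++ e)) →
        ∀ a ∈ e.take (x + 1 - k), a = false
    from key 1 le_rfl e (by simpa using h)
  intro k hk e
  induction e generalizing k with
  | nil => simp
  | cons a e ih =>
    intro he
    rcases Nat.lt_or_ge x k with hxk | hkx
    · simp [show x + 1 - k = 0 by omega]
    have ha : a = false := by
      by_contra ha
      refine isLocoWord_cons_iff.mp he |>.2 true k hk hkx ?_
      simp [forbiddenWord, Bool.eq_true_of_not_eq_false ha]
    subst ha
    rw [show x + 1 - k = (x + 1 - (k + 1)) + 1 by omega, List.take_succ_cons]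
    intro b hb
    rcases List.mem_cons.mp hb with rfl | hb
    · rfl
    · exact ih (k + 1) (by omega) (by simpa [List.replicate_succ'] using he) b hb

theorem isLocoWord_true_false_replicate_append {u : List Bool} :
    IsLocoWord x (true :: false :: (List.replicate x false ++ u)) ↔
      IsLocoWord x (false :: u) := by
  rw [isLocoWord_cons_iff, isLocoWord_cons_replicate_append]
  refine ⟨And.left, fun h => ⟨h, fun c y hy hyx hp => ?_⟩⟩
  rw [← List.cons_append, ← List.replicate_succ] at hp
  have h0 := hp.getElem (i := 0) (by simp [forbiddenWord])
  have hlast := hp.getElem (i := y + 1) (by simp [forbiddenWord])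
  simp only [forbiddenWord_getElem, List.getElem_cons_succ, List.getElem_cons_zero] at h0 hlast
  rw [List.getElem_append_left (by simp; omega), List.getElem_replicate] at hlast
  simp_all

theorem IsLocoWord.eq_replicate_append {e : List Bool} (h : IsLocoWord x (true :: false :: e))
    (hx : x ≤ e.length) : e = List.replicate x false ++ e.drop x := by
  have htake : e.take x = List.replicate x false :=
    List.eq_replicate_iff.mpr ⟨by simp [hx], h.forall_mem_take_eq_false⟩
  rw [← htake, List.take_append_drop]

theorem IsLocoWord.eq_replicate {e : List Bool} (h : IsLocoWord x (true :: false :: e))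
    (hx : e.length ≤ x) : e = List.replicate e.length false :=
  List.eq_replicate_iff.mpr
    ⟨rfl, by simpa [List.take_of_length_le hx] using h.forall_mem_take_eq_false⟩

noncomputable def wordCount (n : ℕ) (P : List Bool → Prop) : ℕ :=
  {l : List Bool | l.length = n ∧ P l}.ncard

section wordCount

variable {n : ℕ} {P Q : List Bool → Prop}

theorem finite_length_eq_and (n : ℕ) (P : List Bool → Prop) :
    {l : List Bool | l.length = n ∧ P l}.Finite :=
  (List.finite_length_eq Bool n).subset fun _ hl => hl.1

theorem wordCount_congr (h : ∀ l : List Bool, l.length = n → (P l ↔ Q l)) :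
    wordCount n P = wordCount n Q := by
  unfold wordCount
  congr 1
  ext l
  exact and_congr_right (h l)

theorem wordCount_eq_zero (h : ∀ l : List Bool, l.length = n → ¬ P l) : wordCount n P = 0 := by
  rw [wordCount, Set.ncard_eq_zero (finite_length_eq_and n P)]
  ext l
  simpa using h l

theorem wordCount_succ (n : ℕ) (P : List Bool → Prop) :
    wordCount (n + 1) P =
      wordCount n (fun t => P (true :: t)) + wordCount n (fun t => P (false :: t)) := by
  have hset : {l : List Bool | l.length = n + 1 ∧ P l} =
      List.cons true '' {t | t.length = n ∧ P (true :: t)} ∪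
        List.cons false '' {t | t.length = n ∧ P (false :: t)} := by
    ext (_ | ⟨b, t⟩)
    · simp
    · cases b <;> simp
  unfold wordCount
  rw [hset, Set.ncard_union_eq ?disj ((finite_length_eq_and _ _).image _)
      ((finite_length_eq_and _ _).image _),
    Set.ncard_image_of_injective _ List.cons_injective,
    Set.ncard_image_of_injective _ List.cons_injective]
  rw [Set.disjoint_left]
  rintro _ ⟨t, -, rfl⟩ ⟨s, -, hs⟩
  simp at hs

theorem wordCount_map_not (n : ℕ) (P : List Bool → Prop) :
    wordCount n (fun l => P (l.map not)) = wordCount n P := by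
  have hset : {l : List Bool | l.length = n ∧ P l} =
      List.map not '' {l | l.length = n ∧ P (l.map not)} := by
    ext l
    refine ⟨fun ⟨hl, hp⟩ =>
      ⟨l.map not, ⟨by simp [hl], by rwa [map_not_map_not]⟩, map_not_map_not l⟩, ?_⟩
    rintro ⟨l, ⟨hl, hp⟩, rfl⟩
    exact ⟨by simp [hl], hp⟩
  unfold wordCount
  rw [hset, Set.ncard_image_of_injective _ (List.map_injective_iff.mpr Bool.not_injective)]

theorem wordCount_append (w : List Bool) (n : ℕ) (P : List Bool → Prop)
    (h : ∀ l : List Bool, l.length = w.length + n → P l → w <+: l) :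
    wordCount (w.length + n) P = wordCount n (fun u => P (w ++ u)) := by
  have hset : {l : List Bool | l.length = w.length + n ∧ P l} =
      (w ++ ·) '' {u | u.length = n ∧ P (w ++ u)} := by
    ext l
    refine ⟨fun ⟨hl, hp⟩ => ?_, ?_⟩
    · obtain ⟨u, rfl⟩ := h l hl hp
      exact ⟨u, ⟨by simpa using hl, hp⟩, rfl⟩
    · rintro ⟨u, ⟨hu, hp⟩, rfl⟩
      exact ⟨by simp [hu], hp⟩
  unfold wordCount
  rw [hset, Set.ncard_image_of_injective _ (List.append_right_injective w)]

theorem wordCount_eq_lt_add_gt_add_one {g : List Bool} (hg : P g) :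
    wordCount g.length P =
      wordCount g.length (fun l => P l ∧ l < g) +
        wordCount g.length (fun l => P l ∧ g < l) + 1 := by
  have hset : {l : List Bool | l.length = g.length ∧ P l} =
      insert g ({l | l.length = g.length ∧ P l ∧ l < g} ∪
        {l | l.length = g.length ∧ P l ∧ g < l}) := by
    ext l
    simp only [Set.mem_ofPred_eq, Set.mem_insert_iff, Set.mem_union]
    refine ⟨fun ⟨hl, hp⟩ => ?_, ?_⟩
    · rcases lt_trichotomy l g with h | h | h <;> simp_all
    · rintro (rfl | ⟨hl, hp, -⟩ | ⟨hl, hp, -⟩) <;> simp_all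
  unfold wordCount
  have hlt := finite_length_eq_and g.length (fun l => P l ∧ l < g)
  have hgt := finite_length_eq_and g.length (fun l => P l ∧ g < l)
  rw [hset, Set.ncard_insert_of_notMem ?notMem (hlt.union hgt), Set.ncard_union_eq ?disj hlt hgt]
  case notMem => simp
  case disj =>
    rw [Set.disjoint_left]
    rintro l ⟨-, -, hlt⟩ ⟨-, -, hgt⟩
    exact lt_asymm hlt hgt

end wordCount

noncomputable def cardOne (x n : ℕ) : ℕ := wordCount n (fun e => IsLocoWord x (true :: e))

noncomputable def cardOneZero (x n : ℕ) : ℕ :=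
  wordCount n (fun e => IsLocoWord x (true :: false :: e))

theorem wordCount_isLocoWord_false_cons (n : ℕ) :
    wordCount n (fun e => IsLocoWord x (false :: e)) = cardOne x n := by
  rw [cardOne, ← wordCount_map_not]
  refine wordCount_congr fun l _ => ?_
  rw [← isLocoWord_map_not]
  simp [Function.comp_def]

theorem cardOne_zero : cardOne x 0 = 1 := by
  rw [cardOne, wordCount, ← Set.ncard_singleton ([] : List Bool)]
  congr 1
  ext l
  simpa [List.length_eq_zero_iff] using fun hl : l = [] =>
    hl ▸ isLocoWord_cons_replicate (x := x) true 0 false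

theorem cardOne_succ (n : ℕ) : cardOne x (n + 1) = cardOne x n + cardOneZero x n := by
  rw [cardOne, wordCount_succ]
  simp only [isLocoWord_cons_cons_self]
  rfl

theorem wordCount_isLocoWord_succ (n : ℕ) :
    wordCount (n + 1) (IsLocoWord x) = 2 * cardOne x n := by
  rw [wordCount_succ, wordCount_isLocoWord_false_cons, cardOne, two_mul]

theorem cardOneZero_of_lt {n : ℕ} (hn : n < x) : cardOneZero x n = 1 := by
  rw [cardOneZero, wordCount, ← Set.ncard_singleton (List.replicate n false)]
  congr 1
  ext e
  refine ⟨fun ⟨he, h⟩ => he ▸ h.eq_replicate (by omega), ?_⟩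
  rintro rfl
  exact ⟨by simp,
    by simpa [← List.replicate_succ] using isLocoWord_cons_replicate true (n + 1) false⟩

theorem cardOneZero_add (j : ℕ) : cardOneZero x (x + j) = cardOne x j := by
  have hsplit := wordCount_append (List.replicate x false) j
    (fun e => IsLocoWord x (true :: false :: e))
    fun e he h => ⟨e.drop x, (h.eq_replicate_append (by simp at he; omega)).symm⟩
  simp only [List.length_replicate, isLocoWord_true_false_replicate_append] at hsplit
  rw [cardOneZero, hsplit, wordCount_isLocoWord_false_cons]

noncomputable def weight (x : ℕ) : List Bool → ℕ
  | [] => 0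
  | b :: t => (if b then cardOneZero x t.length else 0) + weight x t

theorem weight_replicate_false_append (k : ℕ) (u : List Bool) :
    weight x (List.replicate k false ++ u) = weight x u := by
  induction k with
  | zero => rfl
  | succ k ih => simp [List.replicate_succ, weight, ih]

theorem weight_add_weight_map_not_add_one (f : List Bool) :
    weight x f + weight x (f.map not) + 1 = cardOne x f.length := by
  induction f with
  | nil => simp [weight, cardOne_zero]
  | cons b t ih =>
    rw [List.length_cons, cardOne_succ, ← ih]
    cases b <;>
      simp only [weight, List.map_cons, List.length_map, Bool.not_false, Bool.not_true,
        Bool.false_eq_true, ↓reduceIte] <;> ring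

noncomputable def prefixIndex (x : ℕ) (b : Bool) (f : List Bool) : ℕ :=
  wordCount f.length (fun e => IsLocoWord x (b :: e) ∧ e < f)

theorem prefixIndex_replicate_false (b : Bool) (n : ℕ) :
    prefixIndex x b (List.replicate n false) = 0 :=
  wordCount_eq_zero fun _ he h => not_lt_replicate_false (by simpa using he) h.2

theorem prefixIndex_true_true_cons (f : List Bool) :
    prefixIndex x true (true :: f) = cardOneZero x f.length + prefixIndex x true f := by
  rw [prefixIndex, List.length_cons, wordCount_succ, add_comm]
  simp only [isLocoWord_cons_cons_self, List.cons_lt_cons_self]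
  congr 1
  exact wordCount_congr fun e _ => and_iff_left (by simp [List.cons_lt_cons_iff])

theorem prefixIndex_true_false_replicate_append (u : List Bool) :
    prefixIndex x true (false :: (List.replicate x false ++ u)) = prefixIndex x false u := by
  have hsplit := wordCount_append (List.replicate x false) u.length
    (fun e => IsLocoWord x (true :: false :: e) ∧ e < List.replicate x false ++ u)
    fun e he h => ⟨e.drop x, (h.1.eq_replicate_append (by simp at he; omega)).symm⟩
  simp only [List.length_replicate, isLocoWord_true_false_replicate_append,
    append_lt_append_left_iff] at hsplit
  rw [prefixIndex, List.length_cons, wordCount_succ, wordCount_eq_zero, zero_add]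
  · simp only [List.cons_lt_cons_self, List.length_append, List.length_replicate]
    exact hsplit
  · intro e _ h
    simpa [List.cons_lt_cons_iff, Bool.lt_iff] using h.2

theorem prefixIndex_false_add_prefixIndex_true_map_not_add_one {f : List Bool}
    (hf : IsLocoWord x (false :: f)) :
    prefixIndex x false f + prefixIndex x true (f.map not) + 1 = cardOne x f.length := by
  have hnf : IsLocoWord x (true :: f.map not) := by
    simpa using isLocoWord_map_not.mpr hf
  have hsplit := wordCount_eq_lt_add_gt_add_one (P := fun e => IsLocoWord x (true :: e)) hnf
  rw [List.length_map] at hsplit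
  rw [cardOne, hsplit, prefixIndex, prefixIndex, List.length_map, add_comm (wordCount _ _)]
  congr 2
  rw [← wordCount_map_not]
  refine wordCount_congr fun e he => and_congr ?_ ?_
  · simpa using isLocoWord_map_not (x := x) (l := true :: e)
  · conv_lhs => rw [← map_not_map_not f]
    exact map_not_lt_map_not_iff (by simpa using he)

theorem prefixIndex_false_eq_weight {f : List Bool} (hf : IsLocoWord x (false :: f))
    (hnf : prefixIndex x true (f.map not) = weight x (f.map not)) :
    prefixIndex x false f = weight x f := by
  have hindex := prefixIndex_false_add_prefixIndex_true_map_not_add_one hf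
  have hweight := weight_add_weight_map_not_add_one (x := x) f
  omega

theorem prefixIndex_true_eq_weight {f : List Bool} (hf : IsLocoWord x (true :: f)) :
    prefixIndex x true f = weight x f := by
  induction hn : f.length using Nat.strong_induction_on generalizing f with
  | _ n ih =>
  rcases f with _ | ⟨_ | _, f⟩
  · exact prefixIndex_replicate_false true 0
  · by_cases hx : x ≤ f.length
    · obtain ⟨u, rfl⟩ : ∃ u, f = List.replicate x false ++ u :=
        ⟨_, hf.eq_replicate_append hx⟩
      have hu : IsLocoWord x (false :: u) := isLocoWord_true_false_replicate_append.mp hf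
      have hnu := ih u.length (by simp at hn; omega) (f := u.map not)
        (by simpa using isLocoWord_map_not.mpr hu) (by simp)
      rw [prefixIndex_true_false_replicate_append, prefixIndex_false_eq_weight hu hnu, weight,
        weight_replicate_false_append]
      simp
    · rw [hf.eq_replicate (by omega), ← List.replicate_succ, prefixIndex_replicate_false]
      simpa [weight] using (weight_replicate_false_append (x := x) (f.length + 1) []).symm
  · rw [prefixIndex_true_true_cons, ih f.length (by simp at hn; omega)
      (isLocoWord_cons_cons_self.mp hf) rfl, weight]
    simp

theorem noForbidden_iff_isLocoWord_ofFn {m : ℕ} (c : Fin m → Bool) :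
    noForbidden m x c ↔ IsLocoWord x (List.ofFn c) := by
  have hc : ∀ i j (hi : i < m) (hj : j < m), i = j → c ⟨i, hi⟩ = c ⟨j, hj⟩ := by
    rintro i _ _ _ rfl; rfl
  have hlen : ∀ (b : Bool) y, (forbiddenWord b y).length = y + 2 := by simp [forbiddenWord]
  simp only [IsLocoWord, List.infix_iff_getElem?, List.length_ofFn, hlen, List.getElem?_ofFn]
  constructor
  · rintro h b y hy hyx ⟨k, hk, hpat⟩
    have key : ∀ i (hi : i < y + 2),
        c ⟨k + i, by omega⟩ = if i = 0 ∨ i = y + 1 then b else !b := by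
      intro i hi
      have := hpat i hi
      rw [dif_pos (by omega), forbiddenWord_getElem, Option.some_inj] at this
      rw [← this]
      exact hc _ _ _ _ (by omega)
    have hk0 : c ⟨k, by omega⟩ = b := by simpa using key 0 (by omega)
    refine h k y hy hyx (by omega) ⟨fun i hi hiy => ?_, ?_⟩
    · rw [hk0, key i (by omega), if_neg (by omega)]
    · rw [hk0, (hc _ _ _ _ (by omega)).trans (key (y + 1) (by omega)), if_pos (by omega)]
  · rintro h j y hy hyx hj ⟨hmid, hend⟩
    refine h (c ⟨j, by omega⟩) y hy hyx ⟨j, by omega, fun i hi => ?_⟩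
    rw [dif_pos (by omega), forbiddenWord_getElem, Option.some_inj]
    split_ifs with hi0
    · rcases hi0 with rfl | rfl
      · exact hc _ _ _ _ (by omega)
      · exact (hc _ _ _ _ (by omega)).trans hend
    · exact (hc _ _ _ _ (by omega)).trans (hmid i (by omega) (by omega))

theorem lexLt_iff_lt_reverse_ofFn {m : ℕ} (d c : Fin m → Bool) :
    lexLt m d c ↔ (List.ofFn d).reverse < (List.ofFn c).reverse := by
  rw [List.lt_iff_exists]
  simp only [List.length_reverse, List.length_ofFn, lt_irrefl, and_false, false_or,
    List.getElem_reverse, List.getElem_ofFn, Bool.lt_iff]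
  constructor
  · rintro ⟨i, hdi, hci, hij⟩
    refine ⟨m - 1 - i, by omega, by omega, fun j hj => hij _ (by simp; omega), ?_, ?_⟩
    · convert hdi using 2
      ext; simp; omega
    · convert hci using 2
      ext; simp; omega
  · rintro ⟨i, hi, _, hij, hdi, hci⟩
    refine ⟨⟨m - 1 - i, by omega⟩, hdi, hci, fun j hj => ?_⟩
    convert hij (m - 1 - j) (by simp at hj; omega) using 2 <;>
      ext <;> simp <;> omega

theorem natCard_eq_wordCount {m : ℕ} (P : List Bool → Prop) :
    Nat.card {d : Fin m → Bool // P (List.ofFn d).reverse} = wordCount m P := by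
  rw [wordCount, ← Nat.card_coe_set_eq]
  refine Nat.card_congr (Equiv.ofBijective (fun d => ⟨(List.ofFn d.1).reverse, by simp, d.2⟩)
    ⟨fun d d' h => ?_, fun l => ?_⟩)
  · simpa [Subtype.ext_iff] using h
  · obtain ⟨l, rfl, hl⟩ := l
    have hof : List.ofFn (fun i : Fin l.length => l.reverse[i.1]'(by simp)) = l.reverse :=
      List.ext_getElem (by simp) (by simp)
    exact ⟨⟨_, by rwa [hof, List.reverse_reverse]⟩,
      Subtype.ext (by simp only [hof, List.reverse_reverse])⟩

theorem locoN_eq_wordCount (m : ℕ) : locoN m x = wordCount m (IsLocoWord x) := by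
  rw [locoN, ← natCard_eq_wordCount]
  exact Nat.card_congr (Equiv.subtypeEquivRight fun c => by
    rw [noForbidden_iff_isLocoWord_ofFn, isLocoWord_reverse])

theorem locoIdx_eq_wordCount {m : ℕ} (c : Fin m → Bool) :
    locoIdx m x c = wordCount m (fun l => IsLocoWord x l ∧ l < (List.ofFn c).reverse) := by
  rw [locoIdx, ← natCard_eq_wordCount]
  exact Nat.card_congr (Equiv.subtypeEquivRight fun d => by
    rw [noForbidden_iff_isLocoWord_ofFn, isLocoWord_reverse, lexLt_iff_lt_reverse_ofFn])

theorem two_mul_cardOne (n : ℕ) : 2 * (cardOne x n : ℤ) = Nex (n + 1) x := by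
  rcases n with _ | n
  · simp [cardOne_zero, Nex]
  · rw [Nex, if_neg (by omega), show ((n + 1 : ℕ) + 1 : ℤ).toNat = n + 1 + 1 by omega,
      locoN_eq_wordCount, wordCount_isLocoWord_succ]
    push_cast
    ring

theorem two_mul_cardOneZero (k : ℕ) : 2 * (cardOneZero x k : ℤ) = Nex (k - x + 1) x := by
  rcases Nat.lt_or_ge k x with hk | hk
  · rw [cardOneZero_of_lt hk, Nex, if_pos (by omega)]
    norm_num
  · obtain ⟨j, rfl⟩ := Nat.exists_eq_add_of_le hk
    rw [cardOneZero_add, two_mul_cardOne]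
    push_cast
    ring_nf

theorem weight_reverse_ofFn {k : ℕ} (g : Fin k → Bool) :
    weight x (List.ofFn g).reverse = ∑ i, if g i then cardOneZero x i else 0 := by
  induction k with
  | zero => simp [weight]
  | succ k ih =>
    rw [List.ofFn_succ', List.concat_eq_append, List.reverse_append, Fin.sum_univ_castSucc]
    simp [weight, ih, add_comm]

theorem wordCount_lt_true_cons (f : List Bool) :
    wordCount (f.length + 1) (fun l => IsLocoWord x l ∧ l < true :: f) =
      cardOne x f.length + prefixIndex x true f := by
  rw [wordCount_succ, ← wordCount_isLocoWord_false_cons, add_comm]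
  simp only [List.cons_lt_cons_self]
  congr 1
  exact wordCount_congr fun e _ => and_iff_left (by simp [List.cons_lt_cons_iff])

end Loco

open Loco in
/-- For all `m ≥ 2`, `x ≥ 1` and every codeword `c ∈ C(m, x)` with leftmost
bit `c_{m-1} = 1`, the index satisfies
`2 g(c) = N(m, x) + Σ_{i=0}^{m-2} N(i - x + 1, x) · [c_i = 1]`, where any term `N(k, x)` with
`k ≤ 1` is interpreted, by convention, as `2`. -/
theorem loco_index_formula_lmb_one (m x : ℕ) (hm : 2 ≤ m)
    (c : Fin m → Bool) (hc : noForbidden m x c)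
    (h0 : c ⟨m - 1, by omega⟩ = true) :
    2 * (locoIdx m x c : ℤ)
      = Nex (m : ℤ) x
        + ∑ i : Fin (m - 1),
            if c (Fin.castLE (by omega) i) = true then
              Nex (((i : ℕ) : ℤ) - (x : ℤ) + 1) x
            else 0 := by
  obtain ⟨n, rfl⟩ : ∃ n, m = n + 1 := ⟨m - 1, by omega⟩
  set f := (List.ofFn fun i : Fin n => c i.castSucc).reverse with hf
  have hword : (List.ofFn c).reverse = true :: f := by
    rw [List.ofFn_succ', List.concat_eq_append, List.reverse_append, ← h0]
    rfl
  have hcode : IsLocoWord x (true :: f) :=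
    hword ▸ isLocoWord_reverse.mpr ((noForbidden_iff_isLocoWord_ofFn c).mp hc)
  have hcount := wordCount_lt_true_cons (x := x) f
  rw [show f.length = n by simp [hf]] at hcount
  rw [locoIdx_eq_wordCount, hword, hcount, prefixIndex_true_eq_weight hcode, hf,
    weight_reverse_ofFn]
  push_cast
  rw [mul_add, two_mul_cardOne, Finset.mul_sum]
  congr 1
  refine Fintype.sum_congr _ _ fun i => ?_
  rw [show ∀ h, Fin.castLE h i = i.castSucc from fun _ => rfl]
  split_ifs
  · exact two_mul_cardOneZero i
  · rfl
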